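/- Truth lemma for the canonical deterministic model K_d of ℜ_d: for every formula φ ∈ Φ₀ and every world (w₁,w₂) of K_d, φ ∈ w₁ if and only if (w₁,w₂) ⊩ φ. -/

import Mathlib

/-- Formulas of the modal language 𝓛: propositional variables, ⊥, →, and ▷. -/
inductive Formula : Type
  | var : ℕ → Formula
  | bot : Formula
  | imp : Formula → Formula → Formula
  | tri : Formula → Formula → Formula
deriving DecidableEq

namespace Formula

/-- ¬φ := φ → ⊥ -/
def neg (φ : Formula) : Formula := imp φ bot
/-- ⊤ := ¬⊥ -/
def top : Formula := neg bot
/-- φ ∨ ψ := ¬φ → ψ -/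
def disj (φ ψ : Formula) : Formula := imp (neg φ) ψ
/-- φ ∧ ψ := ¬(φ → ¬ψ) -/
def conj (φ ψ : Formula) : Formula := neg (imp φ (neg ψ))

/-- `φ` is a substitution instance of a classical propositional tautology:
it evaluates to `true` under every boolean valuation of formulas that
respects `⊥` and `→` (variables and `▷`-formulas are treated as atoms). -/
def IsPropTaut (φ : Formula) : Prop :=
  ∀ v : Formula → Bool, v bot = false →
    (∀ a b, v (imp a b) = (!(v a) || v b)) → v φ = true

/-- Hilbert-style provability.  `Prv false` is the logic ℜ (axioms: classical
tautologies, A1, A2, A3; rules: Modus Ponens and monotonicity M);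
`Prv true` is the logic ℜ_d, which additionally has axiom A4. -/
inductive Prv : Bool → Formula → Prop
  | taut {d : Bool} {φ} : IsPropTaut φ → Prv d φ
  | a1 {d : Bool} (φ ψ χ) : Prv d (imp (tri φ ψ) (imp (tri χ ψ) (tri (disj φ χ) ψ)))
  | a2 {d : Bool} (φ) : Prv d (tri bot φ)
  | a3 {d : Bool} (φ) : Prv d (tri φ top)
  | a4 (φ ψ χ) : Prv true (imp (tri φ ψ) (imp (tri φ χ) (tri φ (conj ψ χ))))
  | mp {d : Bool} {φ ψ} : Prv d (imp φ ψ) → Prv d φ → Prv d ψ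
  | mono {d : Bool} {φ₁ φ₂ ψ₁ ψ₂} : Prv d (imp φ₁ φ₂) → Prv d (imp ψ₁ ψ₂) →
      Prv d (imp (tri φ₂ ψ₁) (tri φ₁ ψ₂))

/-- `Deriv d Δ φ`: φ is derivable from the hypotheses Δ together with all
theorems of the logic (`Prv d`) using only Modus Ponens. -/
inductive Deriv (d : Bool) (Δ : Set Formula) : Formula → Prop
  | hyp {φ} : φ ∈ Δ → Deriv d Δ φ
  | thm {φ} : Prv d φ → Deriv d Δ φ
  | mp {φ ψ} : Deriv d Δ (imp φ ψ) → Deriv d Δ φ → Deriv d Δ ψ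

/-- Conjunction of a list of formulas (empty conjunction is ⊤). -/
def conjList : List Formula → Formula
  | [] => top
  | φ :: l => conj φ (conjList l)

/-- ⋀Γ : conjunction of all formulas of a finite set Γ (⋀∅ = ⊤). -/
noncomputable def bigConj (Γ : Finset Formula) : Formula := conjList Γ.toList

/-- A set of formulas is consistent if ⊥ is not derivable from it. -/
def Consistent (d : Bool) (Δ : Set Formula) : Prop := ¬ Deriv d Δ bot

/-- The pair (u,v) is w-consistent: w ⊬ ⋀u ▷ ¬⋀v. -/
def WCons (d : Bool) (w : Set Formula) (u v : Finset Formula) : Prop :=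
  ¬ Deriv d w (tri (bigConj u) (neg (bigConj v)))

/-- The operation ∼: ∼(¬φ) = φ, and ∼φ = ¬φ if φ is not a negation. -/
def simNeg : Formula → Formula
  | imp φ bot => φ
  | φ => neg φ

/-- Φ is closed under subformulas. -/
def SubClosed (Φ : Finset Formula) : Prop :=
  (∀ a b, imp a b ∈ Φ → a ∈ Φ ∧ b ∈ Φ) ∧ (∀ a b, tri a b ∈ Φ → a ∈ Φ ∧ b ∈ Φ)

/-- Φ is closed under the operation ∼. -/
def SimClosed (Φ : Finset Formula) : Prop := ∀ φ ∈ Φ, simNeg φ ∈ Φ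

/-- w is a maximal consistent subset of Φ: w ⊆ Φ, w is consistent, and for
every φ ∈ Φ either φ ∈ w or ∼φ ∈ w. -/
def MaxCons (d : Bool) (Φ : Finset Formula) (w : Finset Formula) : Prop :=
  w ⊆ Φ ∧ Consistent d ↑w ∧ ∀ φ ∈ Φ, φ ∈ w ∨ simNeg φ ∈ w

/-- Kripke forcing: `rel w u v` means u →_w v, `val w p` means w ⊩ p. -/
def Forces {W : Type*} (rel : W → W → W → Prop) (val : W → ℕ → Prop) :
    W → Formula → Prop
  | w, var p => val w p
  | _, bot => False
  | w, imp a b => Forces rel val w a → Forces rel val w b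
  | w, tri a b => ∀ u v, rel w u v → Forces rel val u a →
      ∃ v', rel w u v' ∧ Forces rel val v' b

end Formula

/-- A Kripke model: a finite set of worlds, a ternary computability relation,
and a forcing relation between worlds and propositional variables. -/
structure KripkeModel where
  W : Type
  fin : Finite W
  rel : W → W → W → Prop
  val : W → ℕ → Prop

/-- A Kripke model is deterministic if for all worlds w, u there is at most
one v with u →_w v. -/
def KripkeModel.Deterministic (M : KripkeModel) : Prop :=
  ∀ w u v v', M.rel w u v → M.rel w u v' → v = v'

/-- Forcing in a Kripke model. -/
def KripkeModel.Forces (M : KripkeModel) : M.W → Formula → Prop :=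
  Formula.Forces M.rel M.val

/-- The standard enumeration of nondeterministic partial recursive functions:
ζ_w(u) = the set of possible outputs of machine (code) w on input u. -/
def zeta (w u : ℕ) : Set ℕ :=
  {v | ((Denumerable.ofNat Nat.Partrec.Code w).eval (Nat.pair u v)).Dom}

/-- The standard enumeration of deterministic partial recursive functions:
ξ_w(u) = the value of the partial recursive function with code w on input u. -/
def xi (w u : ℕ) : Part ℕ :=
  (Denumerable.ofNat Nat.Partrec.Code w).eval u

namespace Formula

/-- Set semantics for nondeterministic partial recursive functions
(existential reading of ▷). -/
def semN (val : ℕ → Set ℕ) : Formula → Set ℕ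
  | var p => val p
  | bot => ∅
  | imp a b => (Set.univ \ semN val a) ∪ semN val b
  | tri a b => {w | ∀ u ∈ semN val a, zeta w u ≠ ∅ → zeta w u ∩ semN val b ≠ ∅}

/-- Set semantics for deterministic partial recursive functions. -/
def semD (val : ℕ → Set ℕ) : Formula → Set ℕ
  | var p => val p
  | bot => ∅
  | imp a b => (Set.univ \ semD val a) ∪ semD val b
  | tri a b => {w | ∀ u ∈ semD val a, ∀ h : (xi w u).Dom, (xi w u).get h ∈ semD val b}

/-- Universal set semantics for nondeterministic partial recursive functions:
every terminating computation path from φ* ends in ψ*. -/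
def semU (val : ℕ → Set ℕ) : Formula → Set ℕ
  | var p => val p
  | bot => ∅
  | imp a b => (Set.univ \ semU val a) ∪ semU val b
  | tri a b => {w | ∀ u ∈ semU val a, zeta w u ⊆ semU val b}

/-- A canonical injective encoding of formulas as natural numbers. -/
def enc : Formula → ℕ
  | var n => 4 * n
  | bot => 1
  | imp a b => 4 * Nat.pair (enc a) (enc b) + 2
  | tri a b => 4 * Nat.pair (enc a) (enc b) + 3

end Formula

namespace Formula

/-- Worlds of the canonical deterministic Kripke model K_d for ℜ_d over Φ₀:
pairs (w₁,w₂) of maximal consistent (in ℜ_d) subsets of Φ₀. -/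
def KdWorld (Φ₀ : Finset Formula) : Type :=
  {p : Finset Formula × Finset Formula // MaxCons true Φ₀ p.1 ∧ MaxCons true Φ₀ p.2}

/-- Computability relation of K_d: (u₁,u₂) →_{(w₁,w₂)} (v₁,v₂) iff the pair
(u₁,v₁) is w₁-consistent in ℜ_d and u₂ = v₁ = v₂. -/
def Kdrel (Φ₀ : Finset Formula) :
    KdWorld Φ₀ → KdWorld Φ₀ → KdWorld Φ₀ → Prop :=
  fun W U V => WCons true (↑W.1.1 : Set Formula) U.1.1 V.1.1 ∧
    U.1.2 = V.1.1 ∧ V.1.1 = V.1.2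

/-- Atomic forcing of K_d: (w₁,w₂) ⊩ p iff p ∈ w₁. -/
def Kdval (Φ₀ : Finset Formula) : KdWorld Φ₀ → ℕ → Prop :=
  fun W n => var n ∈ W.1.1

/-! The only nontrivial case of the induction is φ ▷ ψ ∉ w₁. Then w₁ ⊬ φ ▷ ψ, and there are
maximal consistent u₁ ∋ φ, u₂ ∌ ψ with (u₁, u₂) w₁-consistent: otherwise A4 and M give
w₁ ⊢ ⋀u₁ ▷ ψ for every maximal consistent u₁ ∋ φ, and A1 and M give w₁ ⊢ φ ▷ ψ. In K_d the world
(u₁, u₂) has the successor (u₂, u₂), and every successor of it has first component u₂, which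
refutes ψ. -/

def disjList : List Formula → Formula
  | [] => bot
  | φ :: l => disj φ (disjList l)

noncomputable def bigDisj (Γ : Finset Formula) : Formula := disjList Γ.toList

noncomputable def maxConsSets (d : Bool) (Φ : Finset Formula) : Finset (Finset Formula) :=
  open Classical in Φ.powerset.filter (MaxCons d Φ)

lemma mem_maxConsSets {d : Bool} {Φ u : Finset Formula} :
    u ∈ maxConsSets d Φ ↔ MaxCons d Φ u := by
  classical
  simpa [maxConsSets] using fun h : MaxCons d Φ u => h.1

structure IsValuation (v : Formula → Bool) : Prop where
  bot : v bot = false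
  imp : ∀ a b, v (imp a b) = (!v a || v b)

lemma IsPropTaut.of_isValuation {φ : Formula} (h : ∀ v, IsValuation v → v φ = true) :
    IsPropTaut φ :=
  fun v hb hi => h v ⟨hb, hi⟩

namespace IsValuation

variable {v : Formula → Bool}

lemma neg (hv : IsValuation v) (a : Formula) : v (neg a) = !v a := by
  simp [Formula.neg, hv.imp, hv.bot]

lemma conj (hv : IsValuation v) (a b : Formula) : v (conj a b) = (v a && v b) := by
  simp [Formula.conj, hv.imp, hv.neg]

lemma disj (hv : IsValuation v) (a b : Formula) : v (disj a b) = (v a || v b) := by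
  simp [Formula.disj, hv.imp, hv.neg]

lemma top (hv : IsValuation v) : v top = true := by
  simp [Formula.top, hv.neg, hv.bot]

lemma simNeg (hv : IsValuation v) (a : Formula) : v (simNeg a) = !v a := by
  cases a with
  | imp a b => cases b <;> simp [Formula.simNeg, hv.imp, hv.neg, hv.bot]
  | _ => exact hv.neg _

lemma conjList (hv : IsValuation v) (l : List Formula) : v (conjList l) = l.all v := by
  induction l with
  | nil => exact hv.top
  | cons a l ih => simp [Formula.conjList, hv.conj, ih]

lemma disjList (hv : IsValuation v) (l : List Formula) : v (disjList l) = l.any v := by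
  induction l with
  | nil => exact hv.bot
  | cons a l ih => simp [Formula.disjList, hv.disj, ih]

lemma imp_eq_true (hv : IsValuation v) {a b : Formula} :
    v (Formula.imp a b) = true ↔ (v a = true → v b = true) := by
  cases h : v a <;> simp [hv.imp, h]

lemma bigConj_eq_true (hv : IsValuation v) {Γ : Finset Formula} :
    v (bigConj Γ) = true ↔ ∀ χ ∈ Γ, v χ = true := by
  simp [Formula.bigConj, hv.conjList]

lemma bigDisj_eq_true (hv : IsValuation v) {Γ : Finset Formula} :
    v (bigDisj Γ) = true ↔ ∃ χ ∈ Γ, v χ = true := by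
  simp [Formula.bigDisj, hv.disjList]

lemma bigConj_filter (hv : IsValuation v) (Φ : Finset Formula) :
    v (bigConj (Φ.filter (v · = true))) = true :=
  hv.bigConj_eq_true.2 fun _ hχ => (Finset.mem_filter.1 hχ).2

lemma filter_complete (hv : IsValuation v) {Φ : Finset Formula} (hsim : SimClosed Φ) :
    ∀ χ ∈ Φ, χ ∈ Φ.filter (v · = true) ∨ Formula.simNeg χ ∈ Φ.filter (v · = true) := by
  intro χ hχ
  cases h : v χ
  · exact Or.inr (Finset.mem_filter.2 ⟨hsim χ hχ, by simp [hv.simNeg, h]⟩)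
  · exact Or.inl (Finset.mem_filter.2 ⟨hχ, h⟩)

end IsValuation

lemma IsPropTaut.imp_of_isValuation {a b : Formula}
    (h : ∀ v, IsValuation v → v a = true → v b = true) : IsPropTaut (imp a b) :=
  .of_isValuation fun v hv => hv.imp_eq_true.2 (h v hv)

lemma taut_k (a b : Formula) : IsPropTaut (imp b (imp a b)) :=
  .of_isValuation fun v hv => by simp only [hv.imp]; cases v a <;> cases v b <;> rfl

lemma taut_s (a b c : Formula) :
    IsPropTaut (imp (imp a (imp b c)) (imp (imp a b) (imp a c))) :=
  .of_isValuation fun v hv => by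
    simp only [hv.imp]; cases v a <;> cases v b <;> cases v c <;> rfl

lemma taut_id (a : Formula) : IsPropTaut (imp a a) :=
  .of_isValuation fun v hv => by simp [hv.imp]

lemma taut_simNeg_imp (a b : Formula) : IsPropTaut (imp (simNeg a) (imp a b)) :=
  .of_isValuation fun v hv => by simp only [hv.imp, hv.simNeg]; cases v a <;> cases v b <;> rfl

lemma taut_bigConj_imp_of_mem {Γ : Finset Formula} {φ : Formula} (h : φ ∈ Γ) :
    IsPropTaut (imp (bigConj Γ) φ) :=
  .of_isValuation fun _ hv =>
    hv.imp_eq_true.2 fun hΓ => hv.bigConj_eq_true.1 hΓ φ h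

lemma taut_imp_neg_bigConj_of_simNeg_mem {Γ : Finset Formula} {ψ : Formula}
    (h : simNeg ψ ∈ Γ) : IsPropTaut (imp ψ (neg (bigConj Γ))) :=
  .imp_of_isValuation fun v hv hψ => by
    rw [hv.neg, Bool.not_eq_true', Bool.eq_false_iff]
    intro hΓ
    simpa [hv.simNeg, hψ] using hv.bigConj_eq_true.1 hΓ _ h

lemma taut_conj_intro (a b : Formula) : IsPropTaut (imp a (imp b (conj a b))) :=
  .of_isValuation fun v hv => by
    simp only [hv.imp, hv.conj]; cases v a <;> cases v b <;> rfl

lemma Deriv.mp_taut {d : Bool} {Δ : Set Formula} {a b : Formula} (ht : IsPropTaut (imp a b))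
    (h : Deriv d Δ a) : Deriv d Δ b :=
  .mp (.thm (.taut ht)) h

lemma Deriv.tri_mono {d : Bool} {Δ : Set Formula} {φ₁ φ₂ ψ₁ ψ₂ : Formula}
    (hφ : Prv d (imp φ₁ φ₂)) (hψ : Prv d (imp ψ₁ ψ₂)) (h : Deriv d Δ (tri φ₂ ψ₁)) :
    Deriv d Δ (tri φ₁ ψ₂) :=
  .mp (.thm (.mono hφ hψ)) h

lemma Prv.bigConj {d : Bool} {Γ : Finset Formula} (h : ∀ χ ∈ Γ, Prv d χ) :
    Prv d (bigConj Γ) := by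
  simp only [← Finset.mem_toList] at h
  unfold Formula.bigConj
  generalize Γ.toList = l at h
  induction l with
  | nil => exact .taut (.of_isValuation fun _ hv => hv.top)
  | cons a l ih =>
    exact .mp (.mp (.taut (taut_conj_intro _ _)) (h a (by simp)))
      (ih fun χ hχ => h χ (by simp [hχ]))

lemma Deriv.tri_bigConj {Δ : Set Formula} {A : Formula} {Γ : Finset Formula}
    (h : ∀ χ ∈ Γ, Deriv true Δ (tri A χ)) : Deriv true Δ (tri A (bigConj Γ)) := by
  simp only [← Finset.mem_toList] at h
  unfold Formula.bigConj
  generalize Γ.toList = l at h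
  induction l with
  | nil => exact .thm (.a3 A)
  | cons χ l ih =>
    exact .mp (.mp (.thm (.a4 _ _ _)) (h χ (by simp))) (ih fun χ hχ => h χ (by simp [hχ]))

lemma Deriv.bigDisj_tri {d : Bool} {Δ : Set Formula} {B : Formula} {Γ : Finset Formula}
    (h : ∀ χ ∈ Γ, Deriv d Δ (tri χ B)) : Deriv d Δ (tri (bigDisj Γ) B) := by
  simp only [← Finset.mem_toList] at h
  unfold Formula.bigDisj
  generalize Γ.toList = l at h
  induction l with
  | nil => exact .thm (.a2 B)
  | cons χ l ih =>
    exact .mp (.mp (.thm (.a1 _ _ _)) (h χ (by simp))) (ih fun χ hχ => h χ (by simp [hχ]))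

lemma prv_imp_bigConj_of_deriv {d : Bool} {u : Finset Formula} {χ : Formula}
    (h : Deriv d ↑u χ) : Prv d (imp (bigConj u) χ) := by
  induction h with
  | hyp hχ => exact .taut (taut_bigConj_imp_of_mem hχ)
  | thm hχ => exact .mp (.taut (taut_k _ _)) hχ
  | mp _ _ ih₁ ih₂ => exact .mp (.mp (.taut (taut_s _ _ _)) ih₁) ih₂

namespace MaxCons

variable {d : Bool} {Φ w : Finset Formula}

lemma simNeg_mem_of_not_mem (hw : MaxCons d Φ w) {χ : Formula} (hχ : χ ∈ Φ) (h : χ ∉ w) :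
    simNeg χ ∈ w :=
  (hw.2.2 χ hχ).resolve_left h

lemma bot_not_mem (hw : MaxCons d Φ w) : bot ∉ w :=
  fun h => hw.2.1 (.hyp h)

lemma mem_of_deriv (hw : MaxCons d Φ w) {χ : Formula} (hχ : χ ∈ Φ) (h : Deriv d ↑w χ) :
    χ ∈ w := by
  by_contra hn
  exact hw.2.1 (.mp (.mp_taut (taut_simNeg_imp χ bot) (.hyp (hw.simNeg_mem_of_not_mem hχ hn))) h)

lemma imp_mem_iff (hw : MaxCons d Φ w) {a b : Formula} (hab : imp a b ∈ Φ) (ha : a ∈ Φ)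
    (hb : b ∈ Φ) : imp a b ∈ w ↔ (a ∈ w → b ∈ w) := by
  refine ⟨fun h h' => hw.mem_of_deriv hb (.mp (.hyp h) (.hyp h')), fun h => ?_⟩
  by_cases h' : a ∈ w
  · exact hw.mem_of_deriv hab (.mp_taut (taut_k a b) (.hyp (h h')))
  · exact hw.mem_of_deriv hab
      (.mp_taut (taut_simNeg_imp a b) (.hyp (hw.simNeg_mem_of_not_mem ha h')))

end MaxCons

section Atoms

variable {d : Bool} {Φ : Finset Formula}

/-- Every valuation makes true the conjunction of the formulas of Φ it satisfies; that set is
complete, so it is either maximal consistent or refutable. -/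
lemma prv_bigDisj_maxConsSets (hsim : SimClosed Φ) :
    Prv d (bigDisj ((maxConsSets d Φ).image bigConj)) := by
  classical
  let refutable := Φ.powerset.filter fun u : Finset Formula => ¬ Consistent d ↑u
  have hrefute : Prv d (bigConj (refutable.image fun u => neg (bigConj u))) := by
    refine .bigConj fun χ hχ => ?_
    obtain ⟨u, hu, rfl⟩ := Finset.mem_image.1 hχ
    exact prv_imp_bigConj_of_deriv (not_not.1 (Finset.mem_filter.1 hu).2)
  refine .mp (.taut (.imp_of_isValuation fun v hv hvref => ?_)) hrefute
  let u := Φ.filter (v · = true)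
  have hu : v (bigConj u) = true := hv.bigConj_filter Φ
  by_cases hc : Consistent d ↑u
  · refine hv.bigDisj_eq_true.2 ⟨bigConj u, Finset.mem_image.2 ⟨u, ?_, rfl⟩, hu⟩
    exact mem_maxConsSets.2 ⟨Finset.filter_subset _ _, hc, hv.filter_complete hsim⟩
  · have hu_ref : u ∈ refutable :=
      Finset.mem_filter.2 ⟨Finset.mem_powerset.2 (Finset.filter_subset _ _), hc⟩
    have := hv.bigConj_eq_true.1 hvref _ (Finset.mem_image_of_mem _ hu_ref)
    simp [hv.neg, hu] at this

lemma prv_imp_bigDisj_maxConsSets_mem (hsim : SimClosed Φ) {φ : Formula} (hφ : φ ∈ Φ) :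
    Prv d (imp φ (bigDisj (((maxConsSets d Φ).filter (φ ∈ ·)).image bigConj))) := by
  refine .mp (.taut (.imp_of_isValuation fun v hv hall => hv.imp_eq_true.2 fun hvφ => ?_))
    (prv_bigDisj_maxConsSets hsim)
  obtain ⟨_, hχ, hvu⟩ := hv.bigDisj_eq_true.1 hall
  obtain ⟨u, hu, rfl⟩ := Finset.mem_image.1 hχ
  refine hv.bigDisj_eq_true.2
    ⟨bigConj u, Finset.mem_image_of_mem _ (Finset.mem_filter.2 ⟨hu, ?_⟩), hvu⟩
  by_contra hφu
  have := hv.bigConj_eq_true.1 hvu _ ((mem_maxConsSets.1 hu).simNeg_mem_of_not_mem hφ hφu)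
  simp [hv.simNeg, hvφ] at this

lemma prv_bigConj_neg_imp_of_maxConsSets_not_mem (hsim : SimClosed Φ) (ψ : Formula) :
    Prv d (imp (bigConj (((maxConsSets d Φ).filter (ψ ∉ ·)).image fun u => neg (bigConj u)))
      ψ) := by
  refine .mp (.taut (.imp_of_isValuation fun v hv hall => hv.imp_eq_true.2 fun hvneg => ?_))
    (prv_bigDisj_maxConsSets hsim)
  obtain ⟨_, hχ, hvu⟩ := hv.bigDisj_eq_true.1 hall
  obtain ⟨u, hu, rfl⟩ := Finset.mem_image.1 hχ
  by_cases hψu : ψ ∈ u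
  · exact hv.bigConj_eq_true.1 hvu ψ hψu
  · have := hv.bigConj_eq_true.1 hvneg _
      (Finset.mem_image_of_mem _ (Finset.mem_filter.2 ⟨hu, hψu⟩))
    simp [hv.neg, hvu] at this

end Atoms

lemma exists_wCons_of_not_deriv_tri {Φ : Finset Formula} (hsim : SimClosed Φ)
    {w : Set Formula} {φ ψ : Formula} (hφ : φ ∈ Φ) (h : ¬ Deriv true w (tri φ ψ)) :
    ∃ u₁ u₂, MaxCons true Φ u₁ ∧ MaxCons true Φ u₂ ∧ φ ∈ u₁ ∧ ψ ∉ u₂ ∧ WCons true w u₁ u₂ := by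
  by_contra! hall
  have hatom :
      ∀ u₁ ∈ (maxConsSets true Φ).filter (φ ∈ ·), Deriv true w (tri (bigConj u₁) ψ) := by
    intro u₁ hu₁
    obtain ⟨hu₁, hφu₁⟩ := Finset.mem_filter.1 hu₁
    refine .tri_mono (.taut (taut_id _)) (prv_bigConj_neg_imp_of_maxConsSets_not_mem hsim ψ)
      (.tri_bigConj fun χ hχ => ?_)
    obtain ⟨u₂, hu₂, rfl⟩ := Finset.mem_image.1 hχ
    obtain ⟨hu₂, hψu₂⟩ := Finset.mem_filter.1 hu₂
    exact not_not.1 (hall u₁ u₂ (mem_maxConsSets.1 hu₁) (mem_maxConsSets.1 hu₂) hφu₁ hψu₂)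
  refine h (.tri_mono (prv_imp_bigDisj_maxConsSets_mem hsim hφ) (.taut (taut_id _))
    (.bigDisj_tri fun χ hχ => ?_))
  obtain ⟨u₁, hu₁, rfl⟩ := Finset.mem_image.1 hχ
  exact hatom u₁ hu₁

section Canonical

variable {Φ₀ : Finset Formula} {a b : Formula}

lemma forces_tri_of_mem (ha : ∀ U : KdWorld Φ₀, Forces (Kdrel Φ₀) (Kdval Φ₀) U a → a ∈ U.1.1)
    (hb : ∀ V : KdWorld Φ₀, b ∈ V.1.1 → Forces (Kdrel Φ₀) (Kdval Φ₀) V b) (hbΦ : b ∈ Φ₀)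
    {W : KdWorld Φ₀} (h : tri a b ∈ W.1.1) : Forces (Kdrel Φ₀) (Kdval Φ₀) W (tri a b) := by
  intro U V hUV hUa
  refine ⟨V, hUV, hb V (by_contra fun hbV => hUV.1 ?_)⟩
  exact .tri_mono (.taut (taut_bigConj_imp_of_mem (ha U hUa)))
    (.taut (taut_imp_neg_bigConj_of_simNeg_mem (V.2.1.simNeg_mem_of_not_mem hbΦ hbV))) (.hyp h)

lemma mem_of_forces_tri (hsim : SimClosed Φ₀)
    (ha : ∀ U : KdWorld Φ₀, a ∈ U.1.1 → Forces (Kdrel Φ₀) (Kdval Φ₀) U a)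
    (hb : ∀ V : KdWorld Φ₀, Forces (Kdrel Φ₀) (Kdval Φ₀) V b → b ∈ V.1.1) (haΦ : a ∈ Φ₀)
    (habΦ : tri a b ∈ Φ₀) {W : KdWorld Φ₀} (h : Forces (Kdrel Φ₀) (Kdval Φ₀) W (tri a b)) :
    tri a b ∈ W.1.1 := by
  by_contra hW
  obtain ⟨u₁, u₂, hu₁, hu₂, hau₁, hbu₂, hcons⟩ :=
    exists_wCons_of_not_deriv_tri hsim haΦ fun hd => hW (W.2.1.mem_of_deriv habΦ hd)
  let U : KdWorld Φ₀ := ⟨(u₁, u₂), hu₁, hu₂⟩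
  let V : KdWorld Φ₀ := ⟨(u₂, u₂), hu₂, hu₂⟩
  obtain ⟨V', ⟨-, hV', -⟩, hV'b⟩ := h U V ⟨hcons, rfl, rfl⟩ (ha U hau₁)
  have hV'u₂ : V'.1.1 = u₂ := hV'.symm
  exact hbu₂ (hV'u₂ ▸ hb V' hV'b)

end Canonical

/-- Truth lemma for the canonical deterministic model K_d of ℜ_d: for every
φ ∈ Φ₀ and every world (w₁,w₂) of K_d, φ ∈ w₁ iff (w₁,w₂) ⊩ φ. -/
theorem truth_lemma_Kd (Φ₀ : Finset Formula)
    (hsub : SubClosed Φ₀) (hsim : SimClosed Φ₀)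
    (φ : Formula) (hφ : φ ∈ Φ₀) (W : KdWorld Φ₀) :
    φ ∈ W.1.1 ↔ Forces (Kdrel Φ₀) (Kdval Φ₀) W φ := by
  induction φ generalizing W with
  | var n => rfl
  | bot => exact iff_of_false W.2.1.bot_not_mem id
  | imp a b iha ihb =>
    obtain ⟨haΦ, hbΦ⟩ := hsub.1 a b hφ
    exact (W.2.1.imp_mem_iff hφ haΦ hbΦ).trans (imp_congr (iha haΦ W) (ihb hbΦ W))
  | tri a b iha ihb =>
    obtain ⟨haΦ, hbΦ⟩ := hsub.2 a b hφ
    exact ⟨forces_tri_of_mem (fun U => (iha haΦ U).2) (fun V => (ihb hbΦ V).1) hbΦ,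
      mem_of_forces_tri hsim (fun U => (iha haΦ U).1) (fun V => (ihb hbΦ V).2) haΦ hφ⟩

end Formula
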